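/- arXiv:1509.04701 — 2 statements merged into one kernel-verified Lean document; each statement's English description precedes it below -/
import Mathlib

section
/- If a graph G on n vertices has the property that the minimum size of a maximal matching equals n/2 (so n is even and every maximal matching is perfect), and G is connected but not isomorphic to K_n or K_{n/2,n/2}, then we obtain a contradiction; equivalently, any connected graph G on n vertices not isomorphic to K_n or K_{n/2,n/2} has a maximal matching of size strictly less than n/2. -/
open SimpleGraph

/-- A matching of a simple graph, given as a set of edges: each edge belongs to the
graph, and distinct edges of the matching share no vertex. -/
def EdgeMatching {V : Type*} (G : SimpleGraph V) (M : Set (Sym2 V)) : Prop :=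
  M ⊆ G.edgeSet ∧ ∀ e ∈ M, ∀ f ∈ M, e ≠ f → ∀ v : V, v ∈ e → v ∉ f

/-- The set of vertices covered by a set of edges. -/
def mCover {V : Type*} (M : Set (Sym2 V)) : Set V := {v | ∃ e ∈ M, v ∈ e}

/-- A maximal matching: a matching to which no edge of the graph can be added. -/
def MaximalEdgeMatching {V : Type*} (G : SimpleGraph V) (M : Set (Sym2 V)) : Prop :=
  EdgeMatching G M ∧ ∀ e ∈ G.edgeSet, EdgeMatching G (insert e M) → e ∈ M

/-!
Call `G` randomly matchable when every maximal matching is perfect. A matching covering all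
vertices but two nonadjacent ones is maximal without being perfect, so for a perfect matching `M`
of a randomly matchable graph, exchanging the `M`-edges along an `M`-alternating path that begins
and ends with `M`-edges forces the two ends of the path to be adjacent. With two and three
`M`-edges this makes "joined by an edge of `G`" transitive on the edges of `M`, so in a connected
graph any two `M`-edges are joined. Choosing `M` through an edge `xt` then shows that nonadjacent
vertices have the same neighbours, i.e. `G` is complete multipartite. A path `a v w u` on four
vertices closes into a `4`-cycle, so if `G` is not complete there are exactly two parts, and a
perfect matching, which crosses between them, shows that they have the same size.
-/

section

variable {V : Type*} {G : SimpleGraph V} {M N S : Set (Sym2 V)} {a b c d x y : V}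

lemma EdgeMatching.mono {M' : Set (Sym2 V)} (hM : EdgeMatching G M) (h : M' ⊆ M) :
    EdgeMatching G M' :=
  ⟨h.trans hM.1, fun e he f hf => hM.2 e (h he) f (h hf)⟩

lemma EdgeMatching.eq_of_mem (hM : EdgeMatching G M) {e f : Sym2 V} (he : e ∈ M) (hf : f ∈ M)
    {v : V} (hve : v ∈ e) (hvf : v ∈ f) : e = f :=
  by_contra fun hne => hM.2 e he f hf hne v hve hvf

lemma mCover_union : mCover (M ∪ N) = mCover M ∪ mCover N := by
  ext v
  simp only [mCover, Set.mem_union, Set.mem_ofPred_eq, or_and_right, exists_or]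

lemma mCover_singleton_mk : mCover {s(a, b)} = {a, b} := by
  ext v
  simp [mCover]

lemma mCover_insert_mk : mCover (insert s(a, b) M) = {a, b} ∪ mCover M := by
  ext v
  simp [mCover]

lemma edgeMatching_singleton (hab : G.Adj a b) : EdgeMatching G {s(a, b)} :=
  ⟨by simpa using hab, fun e he f hf hne => absurd (he.trans hf.symm) hne⟩

lemma edgeMatching_pair (hab : G.Adj a b) (hcd : G.Adj c d)
    (hac : a ≠ c) (had : a ≠ d) (hbc : b ≠ c) (hbd : b ≠ d) :
    EdgeMatching G {s(a, b), s(c, d)} := by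
  refine ⟨by simp [Set.insert_subset_iff, hab, hcd], ?_⟩
  simp only [Set.mem_insert_iff, Set.mem_singleton_iff]
  rintro e (rfl | rfl) f (rfl | rfl) hne v hve hvf <;> grind

lemma EdgeMatching.union (hM : EdgeMatching G M) (hN : EdgeMatching G N)
    (hdisj : Disjoint (mCover M) (mCover N)) : EdgeMatching G (M ∪ N) := by
  refine ⟨Set.union_subset hM.1 hN.1, ?_⟩
  rintro e (he | he) f (hf | hf) hne v hve hvf
  · exact hM.2 e he f hf hne v hve hvf
  · exact Set.disjoint_left.1 hdisj ⟨e, he, hve⟩ ⟨f, hf, hvf⟩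
  · exact Set.disjoint_left.1 hdisj ⟨f, hf, hvf⟩ ⟨e, he, hve⟩
  · exact hN.2 e he f hf hne v hve hvf

lemma EdgeMatching.mCover_diff (hM : EdgeMatching G M) (hcov : mCover M = Set.univ)
    (hS : S ⊆ M) : mCover (M \ S) = (mCover S)ᶜ := by
  ext v
  constructor
  · rintro ⟨e, ⟨heM, heS⟩, hve⟩ ⟨f, hfS, hvf⟩
    exact heS (hM.eq_of_mem heM (hS hfS) hve hvf ▸ hfS)
  · intro hv
    obtain ⟨e, heM, hve⟩ : v ∈ mCover M := hcov ▸ Set.mem_univ v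
    exact ⟨e, ⟨heM, fun heS => hv ⟨e, heS, hve⟩⟩, hve⟩

lemma EdgeMatching.maximal_of_forall_mem_mCover (hM : EdgeMatching G M)
    (h : ∀ e ∈ G.edgeSet, ∃ v ∈ e, v ∈ mCover M) : MaximalEdgeMatching G M := by
  refine ⟨hM, fun e he hins => by_contra fun heM => ?_⟩
  obtain ⟨v, hve, f, hf, hvf⟩ := h e he
  exact hins.2 e (Set.mem_insert _ _) f (Set.mem_insert_of_mem _ hf)
    (fun hef => heM (hef ▸ hf)) v hve hvf

lemma EdgeMatching.ncard_mCover [Finite V] (hM : EdgeMatching G M) :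
    (mCover M).ncard = 2 * M.ncard := by
  classical
  have hcov : mCover M = ↑(M.toFinite.toFinset.biUnion Sym2.toFinset) := by
    ext v
    simp [mCover, Sym2.mem_toFinset]
  have hdisj : (M.toFinite.toFinset : Set (Sym2 V)).PairwiseDisjoint Sym2.toFinset := by
    intro e he f hf hne
    simp only [Set.Finite.coe_toFinset] at he hf
    exact Finset.disjoint_left.2 fun v hve hvf =>
      hM.2 e he f hf hne v (Sym2.mem_toFinset.1 hve) (Sym2.mem_toFinset.1 hvf)
  rw [hcov, Set.ncard_coe_finset, Finset.card_biUnion hdisj,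
    Finset.sum_congr rfl fun e he => Sym2.card_toFinset_of_not_isDiag e
      (G.not_isDiag_of_mem_edgeSet (hM.1 ((Set.Finite.mem_toFinset _).1 he))),
    Finset.sum_const, smul_eq_mul, mul_comm, Set.ncard_eq_toFinset_card]

def RandomlyMatchable (G : SimpleGraph V) : Prop :=
  ∀ M, MaximalEdgeMatching G M → mCover M = Set.univ

lemma randomlyMatchable_of_card_le [Fintype V]
    (h : ∀ M, MaximalEdgeMatching G M → Fintype.card V ≤ 2 * M.ncard) :
    RandomlyMatchable G := by
  intro M hM
  refine Set.eq_of_subset_of_ncard_le (Set.subset_univ _) ?_ Set.finite_univ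
  rw [hM.1.ncard_mCover, Set.ncard_univ, Nat.card_eq_fintype_card]
  exact h M hM

namespace RandomlyMatchable

lemma exists_superset [Finite V] (hG : RandomlyMatchable G) {M₀ : Set (Sym2 V)}
    (hM₀ : EdgeMatching G M₀) :
    ∃ M, M₀ ⊆ M ∧ EdgeMatching G M ∧ mCover M = Set.univ := by
  obtain ⟨M, hM₀M, hmax⟩ := Finite.exists_le_maximal hM₀
  refine ⟨M, hM₀M, hmax.1, hG M ⟨hmax.1, fun e _ hins => ?_⟩⟩
  exact hmax.2 hins (Set.subset_insert e M) (Set.mem_insert e M)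

lemma adj_of_mCover_eq (hG : RandomlyMatchable G) (hN : EdgeMatching G N)
    (hcov : mCover N = {x, y}ᶜ) : G.Adj x y := by
  by_contra hxy
  have hmax : MaximalEdgeMatching G N := by
    refine hN.maximal_of_forall_mem_mCover fun e he => ?_
    induction e using Sym2.ind with
    | _ u w =>
      rw [hcov]
      have huw : G.Adj u w := he
      by_cases hu : u = x ∨ u = y
      · refine ⟨w, Sym2.mem_mk_right u w, fun hw => ?_⟩
        simp only [Set.mem_insert_iff, Set.mem_singleton_iff] at hw
        rcases hu with rfl | rfl <;> rcases hw with rfl | rfl <;> simp_all [G.adj_comm]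
      · exact ⟨u, Sym2.mem_mk_left u w, by simpa using hu⟩
  have hx : x ∈ mCover N := hG N hmax ▸ Set.mem_univ x
  exact (hcov ▸ hx) (Set.mem_insert x _)

/-- Exchanging the part `S` of a perfect matching for a matching `N` that covers the vertices of
`S` except `x` and `y` leaves exactly `x` and `y` uncovered. -/
lemma adj_of_exchange (hG : RandomlyMatchable G) (hM : EdgeMatching G M) (hcov : mCover M = Set.univ) (hS : S ⊆ M)
    (hN : EdgeMatching G N) (hNcov : mCover N = mCover S \ {x, y})
    (hx : x ∈ mCover S) (hy : y ∈ mCover S) : G.Adj x y := by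
  have hdisj : Disjoint (mCover (M \ S)) (mCover N) := by
    rw [hM.mCover_diff hcov hS, hNcov]
    exact disjoint_compl_left.mono_right Set.sdiff_subset
  refine hG.adj_of_mCover_eq ((hM.mono Set.sdiff_subset).union hN hdisj) ?_
  rw [mCover_union, hM.mCover_diff hcov hS, hNcov]
  ext v
  by_cases hv : v ∈ mCover S <;> grind

end RandomlyMatchable

end

lemma SimpleGraph.Connected.induction_on_adj {V : Type*} {G : SimpleGraph V} (hconn : G.Connected)
    {P : V → Prop} (h : ∀ v w, G.Adj v w → P v → P w) {u : V} (hu : P u) (v : V) : P v := by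
  obtain ⟨q⟩ := hconn u v
  induction q with
  | nil => exact hu
  | cons hadj _ ih => exact ih (h _ _ hadj hu)

/-- A perfect matching of `G`, encoded by the involution sending each vertex to its partner. -/
structure PerfectPairing {V : Type*} (G : SimpleGraph V) where
  toFun : V → V
  adj : ∀ v, G.Adj v (toFun v)
  toFun_toFun : ∀ v, toFun (toFun v) = v

namespace PerfectPairing

variable {V : Type*} {G : SimpleGraph V}

instance : CoeFun (PerfectPairing G) fun _ => V → V := ⟨toFun⟩

lemma exists_of_mCover_eq_univ {M : Set (Sym2 V)} (hM : EdgeMatching G M)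
    (hcov : mCover M = Set.univ) :
    ∃ p : PerfectPairing G, ∀ u v, s(u, v) ∈ M → p u = v := by
  have hpartner : ∀ u, ∃ v, s(u, v) ∈ M := by
    intro u
    obtain ⟨e, he, hue⟩ : u ∈ mCover M := hcov ▸ Set.mem_univ u
    induction e using Sym2.ind with
    | _ a b =>
      rcases Sym2.mem_iff.1 hue with rfl | rfl
      exacts [⟨b, he⟩, ⟨a, Sym2.eq_swap ▸ he⟩]
  choose q hq using hpartner
  have hq_eq : ∀ u v, s(u, v) ∈ M → q u = v := fun u v huv =>
    Sym2.congr_right.1 (hM.eq_of_mem (hq u) huv (Sym2.mem_mk_left _ _) (Sym2.mem_mk_left _ _))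
  exact ⟨⟨q, fun u => hM.1 (hq u), fun u => hq_eq _ _ (Sym2.eq_swap ▸ hq u)⟩, hq_eq⟩

variable (p : PerfectPairing G) {a b c u v w : V}

@[simp]
lemma apply_apply (v : V) : p (p v) = v := p.toFun_toFun v

lemma ne_apply (v : V) : v ≠ p v := (p.adj v).ne

def edge (v : V) : Sym2 V := s(v, p v)

def edges : Set (Sym2 V) := Set.range p.edge

@[simp]
lemma edge_apply (v : V) : p.edge (p v) = p.edge v := by
  simp [edge, Sym2.eq_swap]

lemma edge_eq_edge_iff : p.edge u = p.edge v ↔ u = v ∨ u = p v := by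
  refine ⟨fun h => ?_, ?_⟩
  · have hu : u ∈ p.edge v := h ▸ Sym2.mem_mk_left u (p u)
    exact Sym2.mem_iff.1 hu
  · rintro (rfl | rfl) <;> simp

lemma edgeMatching_edges : EdgeMatching G p.edges := by
  refine ⟨Set.range_subset_iff.2 p.adj, ?_⟩
  rintro _ ⟨u, rfl⟩ _ ⟨w, rfl⟩ hne v hvu hvw
  simp only [edge, Sym2.mem_iff] at hvu hvw
  refine hne ((p.edge_eq_edge_iff).2 ?_)
  grind [apply_apply]

lemma mCover_edges : mCover p.edges = Set.univ :=
  Set.eq_univ_of_forall fun v => ⟨p.edge v, Set.mem_range_self v, Sym2.mem_mk_left _ _⟩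

lemma adj_apply_of_adj (hG : RandomlyMatchable G) (hab : G.Adj a b) (hne : p.edge a ≠ p.edge b) :
    G.Adj (p a) (p b) := by
  rw [Ne, edge_eq_edge_iff, not_or] at hne
  have hab_ne := hab.ne
  refine hG.adj_of_exchange p.edgeMatching_edges p.mCover_edges (S := {p.edge a, p.edge b})
    (Set.pair_subset (Set.mem_range_self a) (Set.mem_range_self b))
    (edgeMatching_singleton hab) ?_ ?_ ?_
  · simp only [edge, mCover_insert_mk, mCover_singleton_mk]
    ext v
    grind [apply_apply, ne_apply]
  all_goals simp [edge, mCover_insert_mk, mCover_singleton_mk]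

lemma adj_of_adj_of_apply_adj (hG : RandomlyMatchable G) (hac : G.Adj a c) (hcb : G.Adj (p c) b)
    (hne_ac : p.edge a ≠ p.edge c) (hne_ab : p.edge a ≠ p.edge b)
    (hne_cb : p.edge c ≠ p.edge b) :
    G.Adj a b := by
  have hpab : G.Adj (p a) (p b) := by
    rw [Ne, edge_eq_edge_iff, not_or] at hne_ac hne_ab hne_cb
    have hac_ne := hac.ne
    have hcb_ne := hcb.ne
    refine hG.adj_of_exchange p.edgeMatching_edges p.mCover_edges
      (S := {p.edge a, p.edge c, p.edge b}) ?_
      (edgeMatching_pair hac hcb hne_ac.2 hne_ab.1 (p.ne_apply c) hne_cb.1) ?_ ?_ ?_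
    · rintro _ (rfl | rfl | rfl) <;> exact Set.mem_range_self _
    · simp only [edge, mCover_insert_mk, mCover_singleton_mk]
      ext v
      grind [apply_apply, ne_apply]
    all_goals simp [edge, mCover_insert_mk, mCover_singleton_mk]
  simpa using p.adj_apply_of_adj hG hpab (by simpa using hne_ab)

def Linked (u v : V) : Prop := G.Adj u v ∨ G.Adj u (p v)

lemma linked_of_adj_of_edge_eq (hG : RandomlyMatchable G) (hvw : G.Adj v w)
    (huv : p.edge u = p.edge v) (huw : p.edge u ≠ p.edge w) : p.Linked u w := by
  rcases p.edge_eq_edge_iff.1 huv with rfl | rfl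
  · exact Or.inl hvw
  · simpa [Linked] using Or.inr (p.adj_apply_of_adj hG hvw (by simpa using huw))

variable {p}

lemma Linked.of_edge_eq_right (h : p.Linked u v) (hvw : p.edge v = p.edge w) : p.Linked u w := by
  rcases p.edge_eq_edge_iff.1 hvw with rfl | rfl
  · exact h
  · simpa [Linked, or_comm] using h

lemma Linked.trans (hG : RandomlyMatchable G) (hac : p.Linked a c) (hcb : p.Linked c b)
    (hne_ac : p.edge a ≠ p.edge c) (hne_ab : p.edge a ≠ p.edge b)
    (hne_cb : p.edge c ≠ p.edge b) :
    p.Linked a b := by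
  rcases hac with hac | hac <;> rcases hcb with hcb | hcb
  · exact Or.inr (p.adj_of_adj_of_apply_adj hG hac (p.adj_apply_of_adj hG hcb hne_cb) hne_ac
      (by simpa using hne_ab) (by simpa using hne_cb))
  · exact Or.inl (p.adj_of_adj_of_apply_adj hG hac
      (by simpa using p.adj_apply_of_adj hG hcb (by simpa using hne_cb)) hne_ac hne_ab hne_cb)
  · exact Or.inl (p.adj_of_adj_of_apply_adj hG hac (by simpa using hcb) (by simpa using hne_ac)
      hne_ab (by simpa using hne_cb))
  · exact Or.inr (p.adj_of_adj_of_apply_adj hG hac (by simpa using hcb) (by simpa using hne_ac)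
      (by simpa using hne_ab) (by simpa using hne_cb))

variable (p)

lemma linked_of_edge_ne (hG : RandomlyMatchable G) (hconn : G.Connected)
    (hne : p.edge u ≠ p.edge v) : p.Linked u v := by
  refine hconn.induction_on_adj (P := fun v => p.edge u ≠ p.edge v → p.Linked u v) ?_
    (fun h => absurd rfl h) v hne
  intro v w hvw hv huw
  by_cases huv : p.edge u = p.edge v
  · exact p.linked_of_adj_of_edge_eq hG hvw huv huw
  by_cases hvw' : p.edge v = p.edge w
  · exact (hv huv).of_edge_eq_right hvw'
  · exact (hv huv).trans hG (Or.inl hvw) huv huw hvw'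

end PerfectPairing

lemma PerfectPairing.ncard_eq_ncard_compl {V : Type*} {G : SimpleGraph V} (p : PerfectPairing G)
    (X : Set V) (hX : ∀ v w, G.Adj v w → (v ∈ X ↔ w ∉ X)) :
    X.ncard = Xᶜ.ncard :=
  Nat.card_congr
    { toFun v := ⟨p v, (hX _ _ (p.adj v)).1 v.2⟩
      invFun v := ⟨p v, by_contra fun h => v.2 ((hX _ _ (p.adj v)).2 h)⟩
      left_inv v := Subtype.ext (p.apply_apply v)
      right_inv v := Subtype.ext (p.apply_apply v) }

namespace RandomlyMatchable

variable {V : Type*} [Finite V] {G : SimpleGraph V} {a u v w x y t : V}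

lemma exists_perfectPairing (hG : RandomlyMatchable G) {M₀ : Set (Sym2 V)}
    (hM₀ : EdgeMatching G M₀) :
    ∃ p : PerfectPairing G, ∀ u v, s(u, v) ∈ M₀ → p u = v := by
  obtain ⟨M, hM₀M, hM, hcov⟩ := hG.exists_superset hM₀
  obtain ⟨p, hp⟩ := PerfectPairing.exists_of_mCover_eq_univ hM hcov
  exact ⟨p, fun u v huv => hp u v (hM₀M huv)⟩

lemma adj_of_not_adj (hG : RandomlyMatchable G) (hconn : G.Connected) (hxy : x ≠ y)
    (hnxy : ¬ G.Adj x y) (hxt : G.Adj x t) : G.Adj y t := by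
  obtain ⟨p, hp⟩ := hG.exists_perfectPairing (edgeMatching_singleton hxt.symm)
  have hpt : p t = x := hp t x rfl
  have hne : p.edge t ≠ p.edge y := by
    rw [Ne, PerfectPairing.edge_eq_edge_iff]
    rintro (rfl | rfl)
    · exact hnxy hxt
    · exact hxy (by simpa using hpt.symm)
  rcases p.linked_of_edge_ne hG hconn hne with h | h
  · exact h.symm
  · exact absurd (by simpa [hpt] using p.adj_apply_of_adj hG h (by simpa using hne)) hnxy

lemma adj_of_adj_of_adj_of_adj (hG : RandomlyMatchable G) (hav : G.Adj a v) (hvw : G.Adj v w)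
    (hwu : G.Adj w u) (haw : a ≠ w) (hvu : v ≠ u) (hau : a ≠ u) : G.Adj a u := by
  obtain ⟨p, hp⟩ := hG.exists_perfectPairing (edgeMatching_pair hav hwu haw hau hvw.ne hvu)
  have hpv : p v = a := by rw [← hp a v (by simp), p.apply_apply]
  have hpw : p w = u := hp w u (by simp)
  have hne : p.edge v ≠ p.edge w := by
    rw [Ne, PerfectPairing.edge_eq_edge_iff, hpw]
    exact not_or_intro hvw.ne hvu
  simpa [hpv, hpw] using p.adj_apply_of_adj hG hvw hne

lemma adj_iff_of_not_adj (hG : RandomlyMatchable G) (hconn : G.Connected) (hau : a ≠ u)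
    (hna : ¬ G.Adj a u) (v w : V) :
    G.Adj v w ↔ (v ∈ G.neighborSet a ↔ w ∉ G.neighborSet a) := by
  have hsame : ∀ x, ¬ G.Adj a x → ∀ t, G.Adj a t ↔ G.Adj x t := by
    intro x hx t
    rcases eq_or_ne a x with rfl | hax
    · rfl
    · exact ⟨hG.adj_of_not_adj hconn hax hx,
        hG.adj_of_not_adj hconn hax.symm fun h => hx h.symm⟩
  simp only [mem_neighborSet]
  by_cases hv : G.Adj a v <;> by_cases hw : G.Adj a w <;>
    simp only [hv, hw, not_true, iff_false, not_false_eq_true, iff_true]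
  · exact fun hvw => hna (hG.adj_of_adj_of_adj_of_adj hv hvw ((hsame u hna w).1 hw).symm hw.ne
      (fun h => hna (h ▸ hv)) hau)
  · exact ((hsame w hw v).1 hv).symm
  · exact (hsame v hv w).1 hw
  · exact fun hvw => hw ((hsame v hv w).2 hvw)

end RandomlyMatchable

open Classical in
noncomputable def SimpleGraph.isoCompleteBipartiteGraph {V : Type*} {G : SimpleGraph V}
    (X : Set V) (hX : ∀ v w, G.Adj v w ↔ (v ∈ X ↔ w ∉ X)) :
    G ≃g completeBipartiteGraph X ↥Xᶜ where
  toEquiv := (Equiv.Set.sumCompl X).symm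
  map_rel_iff' {v w} := by
    by_cases hv : v ∈ X <;> by_cases hw : w ∈ X <;>
      simp [hX, hv, hw, Equiv.Set.sumCompl_symm_apply_of_mem,
        Equiv.Set.sumCompl_symm_apply_of_notMem]

/-- any connected graph on n vertices not isomorphic to K_n or to
K_{n/2,n/2} has a maximal matching of size strictly less than n/2. -/
theorem exists_small_maximal_matching {V : Type*} [Fintype V]
    (G : SimpleGraph V) (n : ℕ) (hcard : Fintype.card V = n) (hconn : G.Connected)
    (hK : ¬ Nonempty (G ≃g (⊤ : SimpleGraph (Fin n))))
    (hKB : ¬ Nonempty (G ≃g completeBipartiteGraph (Fin (n / 2)) (Fin (n / 2)))) :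
    ∃ M : Set (Sym2 V), MaximalEdgeMatching G M ∧ 2 * M.ncard < n := by
  subst hcard
  by_contra! hsmall
  have hG : RandomlyMatchable G := randomlyMatchable_of_card_le hsmall
  by_cases hcomplete : G = ⊤
  · subst hcomplete
    exact hK ⟨Iso.completeGraph (Fintype.equivFin V)⟩
  obtain ⟨a, u, hau, hna⟩ : ∃ a u, a ≠ u ∧ ¬ G.Adj a u := by
    by_contra! h
    exact hcomplete (eq_top_iff.2 fun a u => h a u)
  have hadj := hG.adj_iff_of_not_adj hconn hau hna
  obtain ⟨p, -⟩ := hG.exists_perfectPairing (M₀ := ∅) ⟨Set.empty_subset _, by simp⟩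
  have hsplit := p.ncard_eq_ncard_compl _ fun v w => (hadj v w).1
  have hhalf : (G.neighborSet a).ncard = Fintype.card V / 2 := by
    have := Set.ncard_add_ncard_compl (G.neighborSet a)
    rw [Nat.card_eq_fintype_card] at this
    omega
  exact hKB ⟨(isoCompleteBipartiteGraph _ hadj).trans (completeBipartiteGraphCongr
    (Finite.equivFinOfCardEq hhalf) (Finite.equivFinOfCardEq (hsplit.symm.trans hhalf)))⟩
end

section
/- Let G be a graph on an even number 2r of vertices. If G has a matching of the form {vx, wy} (two disjoint edges) such that G − {v, w, x, y} has a connected component with an odd number of vertices, then G has a maximal matching of size less than r. -/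
/-!
Extend `{vx, wy}` to a maximal matching `M`. As `v, w, x, y` are matched among themselves, every
edge of `M` meeting an odd component `C` of `G - {v, w, x, y}` lies inside `C`. So `M` covers an
even number of vertices of `C` and misses one of them: `M` covers fewer than `2r` vertices.
-/

open SimpleGraph

section

variable {V : Type*} {G : SimpleGraph V} {M N : Set (Sym2 V)}

def IsEdgeClosed (M : Set (Sym2 V)) (S : Set V) : Prop :=
  ∀ a b, s(a, b) ∈ M → a ∈ S → b ∈ S

lemma IsEdgeClosed.compl {S : Set V} (hS : IsEdgeClosed M S) : IsEdgeClosed M Sᶜ :=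
  fun a b hab ha hb => ha (hS b a (Sym2.eq_swap ▸ hab) hb)

lemma IsEdgeClosed.image_val_supp (hMG : M ⊆ G.edgeSet) {T : Set V} (hT : IsEdgeClosed M T)
    (c : (G.induce T).ConnectedComponent) : IsEdgeClosed M (Subtype.val '' c.supp) := by
  rintro _ b hab ⟨a, ha, rfl⟩
  have hb : b ∈ T := hT a b hab a.2
  have hadj : (G.induce T).Adj a ⟨b, hb⟩ := hMG hab
  refine ⟨⟨b, hb⟩, ?_, rfl⟩
  rw [ConnectedComponent.mem_supp_iff] at ha ⊢
  exact ha ▸ ConnectedComponent.sound hadj.symm.reachable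

namespace EdgeMatching

lemma mono_s14 (hM : EdgeMatching G M) (hNM : N ⊆ M) : EdgeMatching G N :=
  ⟨hNM.trans hM.1, fun e he f hf => hM.2 e (hNM he) f (hNM hf)⟩

lemma pair {e f : Sym2 V} (he : e ∈ G.edgeSet) (hf : f ∈ G.edgeSet) (hef : ∀ a ∈ e, a ∉ f) :
    EdgeMatching G {e, f} := by
  refine ⟨Set.insert_subset he (Set.singleton_subset_iff.mpr hf), ?_⟩
  rintro g (rfl | rfl) g' (rfl | rfl) hne a hag hag'
  exacts [hne rfl, hef a hag hag', hef a hag' hag, hne rfl]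

lemma eq_of_mem_of_mem (hM : EdgeMatching G M) {e f : Sym2 V} (he : e ∈ M) (hf : f ∈ M)
    {a : V} (hae : a ∈ e) (haf : a ∈ f) : e = f := by
  by_contra hne
  exact hM.2 e he f hf hne a hae haf

lemma isEdgeClosed_mCover (hM : EdgeMatching G M) (hNM : N ⊆ M) : IsEdgeClosed M (mCover N) := by
  rintro a b hab ⟨f, hf, haf⟩
  exact ⟨f, hf, hM.eq_of_mem_of_mem hab (hNM hf) (Sym2.mem_mk_left a b) haf ▸ Sym2.mem_mk_right a b⟩

lemma ncard_mCover_s14 [Finite V] (hM : EdgeMatching G M) : (mCover M).ncard = 2 * M.ncard := by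
  classical
  have : Fintype V := Fintype.ofFinite V
  have hcover : mCover M = ↑(M.toFinset.biUnion Sym2.toFinset) := by
    ext; simp [mCover]
  rw [hcover, Set.ncard_coe_finset, Finset.card_biUnion, Set.ncard_eq_toFinset_card',
    Finset.sum_const_nat (m := 2), mul_comm]
  · intro e he
    exact Sym2.card_toFinset_of_not_isDiag e (G.not_isDiag_of_mem_edgeSet (hM.1 (by simpa using he)))
  · intro e he f hf hne
    rw [Function.onFun, Finset.disjoint_left]
    intro a hae haf
    exact hM.2 e (by simpa using he) f (by simpa using hf) hne a (by simpa using hae) (by simpa using haf)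

lemma even_ncard_mCover_inter [Finite V] (hM : EdgeMatching G M) {S : Set V}
    (hS : IsEdgeClosed M S) : Even (mCover M ∩ S).ncard := by
  have hcover : mCover M ∩ S = mCover {e ∈ M | ∀ a ∈ e, a ∈ S} := by
    ext a
    constructor
    · rintro ⟨⟨e, he, hae⟩, ha⟩
      refine ⟨e, ⟨he, fun b hbe => ?_⟩, hae⟩
      by_cases hba : b = a
      · exact hba ▸ ha
      · exact hS a b ((Sym2.mem_and_mem_iff (Ne.symm hba)).mp ⟨hae, hbe⟩ ▸ he) ha
    · rintro ⟨e, ⟨he, heS⟩, hae⟩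
      exact ⟨⟨e, he, hae⟩, heS a hae⟩
  rw [hcover, (hM.mono_s14 fun e he => he.1).ncard_mCover_s14]
  exact even_two_mul _

lemma exists_mem_not_mem_mCover_of_odd [Finite V] (hM : EdgeMatching G M) {S : Set V}
    (hS : IsEdgeClosed M S) (hodd : Odd S.ncard) : ∃ a ∈ S, a ∉ mCover M := by
  by_contra! hcov
  have heven := hM.even_ncard_mCover_inter hS
  rw [Set.inter_eq_right.mpr hcov] at heven
  exact Nat.not_even_iff_odd.mpr hodd heven

lemma two_mul_ncard_lt [Finite V] (hM : EdgeMatching G M) {a : V} (ha : a ∉ mCover M) :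
    2 * M.ncard < Nat.card V := by
  rw [← hM.ncard_mCover_s14, ← Set.ncard_univ]
  exact Set.ncard_lt_ncard (Set.ssubset_univ_iff.mpr fun h => ha (h ▸ Set.mem_univ a))

lemma exists_maximal_superset [Finite V] (hM : EdgeMatching G M) :
    ∃ M', M ⊆ M' ∧ MaximalEdgeMatching G M' := by
  obtain ⟨M', ⟨hM', hMM'⟩, hmax⟩ := Set.Finite.exists_maximalFor id {N | EdgeMatching G N ∧ M ⊆ N}
    ((Set.toFinite G.edgeSet).finite_subsets.subset fun N hN => hN.1.1) ⟨M, hM, subset_rfl⟩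
  refine ⟨M', hMM', hM', fun e he hins => ?_⟩
  exact hmax (j := insert e M') ⟨hins, hMM'.trans (Set.subset_insert _ _)⟩
    (Set.subset_insert _ _) (Set.mem_insert _ _)

end EdgeMatching

end

/-- if G on 2r vertices has two disjoint edges vx, wy such that
G − {v,w,x,y} has an odd component, then G has a maximal matching of size < r. -/
theorem exists_small_maximal_matching_of_odd_component {V : Type*} [Fintype V]
    (G : SimpleGraph V) (r : ℕ) (hcard : Fintype.card V = 2 * r)
    (v w x y : V) (hvx : G.Adj v x) (hwy : G.Adj w y)
    (hd : v ≠ w ∧ v ≠ y ∧ x ≠ w ∧ x ≠ y)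
    (hodd : ∃ c : (G.induce {a : V | a ≠ v ∧ a ≠ w ∧ a ≠ x ∧ a ≠ y}).ConnectedComponent,
      Odd c.supp.ncard) :
    ∃ M : Set (Sym2 V), MaximalEdgeMatching G M ∧ M.ncard < r := by
  obtain ⟨c, hc⟩ := hodd
  have hpair : EdgeMatching G {s(v, x), s(w, y)} :=
    .pair hvx hwy (by simp only [Sym2.mem_iff]; grind)
  obtain ⟨M, hsub, hMmax⟩ := hpair.exists_maximal_superset
  have hM := hMmax.1
  have hT : IsEdgeClosed M {a : V | a ≠ v ∧ a ≠ w ∧ a ≠ x ∧ a ≠ y} := by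
    convert (hM.isEdgeClosed_mCover hsub).compl using 1
    ext a; simp [mCover, or_comm, or_left_comm]
  obtain ⟨a, -, ha⟩ := hM.exists_mem_not_mem_mCover_of_odd (hT.image_val_supp hM.1 c)
    (by rwa [Set.ncard_image_of_injective _ Subtype.val_injective])
  have := hM.two_mul_ncard_lt ha
  rw [Nat.card_eq_fintype_card, hcard] at this
  exact ⟨M, hMmax, by omega⟩
end
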